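/- arXiv:2107.08813 — 5 statements merged into one kernel-verified Lean document; each statement's English description precedes it below -/
import Mathlib

section
/- Let n ≥ 1, m ≥ 1, let w^1,…,w^m ∈ ℝ^d be arbitrary weight vectors, and let a* ∈ {0,1}^n. Then there exist a price vector p ∈ ℝ^d and pairwise disjoint subsets S^1,…,S^m ⊆ [n] with ⋃_{b=1}^m S^b = {i ∈ [n] : a*_i = 1}, such that for every b ∈ [m] and every T ⊆ [n] one has ⟨w^b − p, a_{S^b}⟩ ≥ ⟨w^b − p, a_T⟩ (i.e. S^b ∈ D(w^b, p)). In other words, a competitive equilibrium with anonymous graphical pricing exists at every bundle a* ∈ {0,1}^n when all valuations are graphical with underlying graph the complete graph K_n. -/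
/-- Edges of the complete graph `K_n`: 2-element subsets of `Fin n`,
encoded as non-diagonal elements of `Sym2 (Fin n)`. -/
abbrev EdgeKn (n : ℕ) : Type := {e : Sym2 (Fin n) // ¬ e.IsDiag}

/-- Coordinates of `ℝ^d`, `d = n + n(n-1)/2`: vertices and edges of `K_n`. -/
abbrev CoordKn (n : ℕ) : Type := Fin n ⊕ EdgeKn n

/-- The edge coordinate `{i,j}` for distinct `i, j`. -/
def edgeCoord {n : ℕ} (i j : Fin n) (h : i ≠ j) : CoordKn n :=
  Sum.inr ⟨s(i, j), fun hd => h (Sym2.mk_isDiag_iff.mp hd)⟩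

/-- The characteristic vector `a_S` of `S ⊆ [n]`. -/
def charVec {n : ℕ} (S : Finset (Fin n)) : CoordKn n → ℝ
  | Sum.inl i => if i ∈ S then 1 else 0
  | Sum.inr e => Sym2.lift ⟨fun i j => if i ∈ S ∧ j ∈ S then (1 : ℝ) else 0,
      fun i j => by simp [and_comm]⟩ e.1

/-- The standard inner product on `ℝ^d`. -/
def dotP {n : ℕ} (x y : CoordKn n → ℝ) : ℝ := ∑ c, x c * y c

/-- `S` is in the demand set `D(w, p)`: it maximizes `⟨w - p, a_T⟩` over all `T ⊆ [n]`. -/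
def InDemand {n : ℕ} (w p : CoordKn n → ℝ) (S : Finset (Fin n)) : Prop :=
  ∀ T : Finset (Fin n),
    dotP (fun c => w c - p c) (charVec T) ≤ dotP (fun c => w c - p c) (charVec S)

/-- The correlation polytope `P(K_n)`. -/
def corrPolytope (n : ℕ) : Set (CoordKn n → ℝ) :=
  convexHull ℝ (Set.range (charVec (n := n)))

/-- The dilate `m·A` of a set `A ⊆ ℝ^d`. -/
def dilate {n : ℕ} (m : ℕ) (A : Set (CoordKn n → ℝ)) : Set (CoordKn n → ℝ) :=
  {x | ∃ y ∈ A, x = (m : ℝ) • y}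

/-- `F` is a face of `P(K_n)`: the set of maximizers of some linear functional `⟨c, ·⟩`. -/
def IsFaceOf {n : ℕ} (F : Set (CoordKn n → ℝ)) : Prop :=
  ∃ c : CoordKn n → ℝ,
    F = {x | x ∈ corrPolytope n ∧ ∀ y ∈ corrPolytope n, dotP c y ≤ dotP c x}

/-! Give the whole bundle `A = {i | a*_i = 1}` to a bidder `b₀` who values it most, at the
price `π = ⟨w^{b₀}, a_A⟩`, and nothing to everyone else. It then suffices to find prices under
which every bidder's utility is nonpositive on every bundle while `A` costs exactly `π`. Goods
outside `A` are made prohibitively expensive; inside `A`, negative (complementary) edge prices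
make the price of a subbundle a concave function of its size, vanishing at `∅`, equal to `π` at
`A`, and above every valuation in between. -/

open Finset

theorem Finset.sym2_inter {α : Type*} [DecidableEq α] (s t : Finset α) :
    (s ∩ t).sym2 = s.sym2 ∩ t.sym2 := by
  ext m
  simp only [mem_inter, mem_sym2_iff, imp_and, forall_and]

namespace CorrelationPricing

variable {n : ℕ}

@[simp]
lemma charVec_inl (S : Finset (Fin n)) (i : Fin n) :
    charVec S (.inl i) = if i ∈ S then 1 else 0 := rfl

@[simp]
lemma charVec_inr (S : Finset (Fin n)) (e : EdgeKn n) :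
    charVec S (.inr e) = if e.1 ∈ S.sym2 then 1 else 0 := by
  obtain ⟨e, -⟩ := e
  induction e using Sym2.ind with
  | _ i j => simp [charVec]

abbrev edgesOf (T : Finset (Fin n)) : Finset (EdgeKn n) := T.sym2.subtype (¬ ·.IsDiag)

lemma card_edgesOf (T : Finset (Fin n)) : #(edgesOf T) = (#T).choose 2 := by
  rw [card_subtype, sym2_eq_image, Sym2.filter_image_mk_not_isDiag, Sym2.card_image_offDiag]

lemma charVec_mono {S T : Finset (Fin n)} (h : S ⊆ T) (c : CoordKn n) :
    charVec S c ≤ charVec T c := by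
  rcases c with i | e
  · simp only [charVec_inl]
    split_ifs with hS hT <;> first | exact absurd (h hS) hT | norm_num
  · simp only [charVec_inr]
    split_ifs with hS hT <;> first | exact absurd (sym2_mono h hS) hT | norm_num

lemma dotP_charVec (x : CoordKn n → ℝ) (T : Finset (Fin n)) :
    dotP x (charVec T) = ∑ i ∈ T, x (.inl i) + ∑ e ∈ edgesOf T, x (.inr e) := by
  rw [dotP, Fintype.sum_sum_type]
  simp only [charVec_inl, charVec_inr, mul_ite, mul_one, mul_zero, ← sum_filter]
  congr 2 <;> ext <;> simp

lemma dotP_charVec_empty (x : CoordKn n → ℝ) : dotP x (charVec ∅) = 0 := by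
  have : charVec (∅ : Finset (Fin n)) = 0 := by ext (i | e) <;> simp
  simp [dotP, this]

lemma dotP_sub_left (x y z : CoordKn n → ℝ) :
    dotP (fun c => x c - y c) z = dotP x z - dotP y z := by
  simp [dotP, sub_mul, sum_sub_distrib]

lemma inDemand_of_le {w p : CoordKn n → ℝ} {S : Finset (Fin n)}
    (hle : ∀ T, dotP w (charVec T) ≤ dotP p (charVec T))
    (hS : dotP p (charVec S) ≤ dotP w (charVec S)) : InDemand w p S := by
  intro T
  rw [dotP_sub_left, dotP_sub_left]
  linarith [hle T]

/-- A subbundle `T ⊆ A` costs `#T / #A * π + R * #T * (#A - #T)`: exactly `π` for `T = A`, and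
at least `R - |π|` for `∅ ≠ T ⊊ A`. -/
noncomputable def bundlePrice (A : Finset (Fin n)) (π R : ℝ) : CoordKn n → ℝ
  | .inl i => if i ∈ A then π / #A + R * (#A - 1) else R
  | .inr e => if e.1 ∈ A.sym2 then -(2 * R) else R

variable {A T : Finset (Fin n)} {π R : ℝ}

lemma dotP_bundlePrice_of_subset (hTA : T ⊆ A) :
    dotP (bundlePrice A π R) (charVec T) = #T / #A * π + R * #T * (#A - #T) := by
  have hvert : ∀ i ∈ T, bundlePrice A π R (.inl i) = π / #A + R * (#A - 1) :=
    fun i hi => if_pos (hTA hi)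
  have hedge : ∀ e ∈ edgesOf T, bundlePrice A π R (.inr e) = -(2 * R) :=
    fun e he => if_pos (sym2_mono hTA (mem_subtype.mp he))
  rw [dotP_charVec, sum_congr rfl hvert, sum_congr rfl hedge, sum_const, sum_const,
    card_edgesOf, nsmul_eq_mul, nsmul_eq_mul, Nat.cast_choose_two]
  ring

lemma dotP_bundlePrice_inter_add_le (hR : 0 ≤ R) (hTA : ¬T ⊆ A) :
    dotP (bundlePrice A π R) (charVec (T ∩ A)) + R ≤ dotP (bundlePrice A π R) (charVec T) := by
  obtain ⟨i, hiT, hiA⟩ := not_subset.mp hTA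
  set p := bundlePrice A π R
  have hle : ∀ c, p c * charVec (T ∩ A) c ≤ p c * charVec T c := by
    have outside c : p c = R → p c * charVec (T ∩ A) c ≤ p c * charVec T c := fun h =>
      h ▸ mul_le_mul_of_nonneg_left (charVec_mono inter_subset_left c) hR
    rintro (j | e)
    · by_cases hj : j ∈ A
      · simp [hj]
      · exact outside _ (if_neg hj)
    · by_cases he : e.1 ∈ A.sym2
      · simp [sym2_inter, he]
      · exact outside _ (if_neg he)
  have hi : p (.inl i) * charVec (T ∩ A) (.inl i) + R ≤ p (.inl i) * charVec T (.inl i) := by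
    simp [p, bundlePrice, hiT, hiA]
  have := single_le_sum (fun c _ => sub_nonneg.mpr (hle c)) (mem_univ (.inl i))
  rw [sum_sub_distrib] at this
  simp only [dotP]
  linarith

lemma neg_abs_le_div_mul {t a : ℕ} (hta : t ≤ a) (π : ℝ) : -|π| ≤ t / a * π := by
  have h0 : (0 : ℝ) ≤ t / a := by positivity
  have h1 : (t : ℝ) / a ≤ 1 := div_le_one_of_le₀ (by exact_mod_cast hta) (by positivity)
  have : |(t : ℝ) / a * π| ≤ |π| := by
    rw [abs_mul, abs_of_nonneg h0]
    exact mul_le_of_le_one_left (abs_nonneg π) h1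
  exact (abs_le.mp this).1

lemma neg_abs_le_dotP_bundlePrice (hR : 0 ≤ R) (hTA : T ⊆ A) :
    -|π| ≤ dotP (bundlePrice A π R) (charVec T) := by
  have : (0 : ℝ) ≤ #A - #T := sub_nonneg.mpr (by exact_mod_cast card_le_card hTA)
  rw [dotP_bundlePrice_of_subset hTA]
  linarith [neg_abs_le_div_mul (card_le_card hTA) π,
    mul_nonneg (mul_nonneg hR (#T).cast_nonneg) this]

lemma sub_abs_le_dotP_bundlePrice (hR : 0 ≤ R) (hTA : T ⊂ A) (hT : T.Nonempty) :
    R - |π| ≤ dotP (bundlePrice A π R) (charVec T) := by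
  have ht : (1 : ℝ) ≤ #T := by exact_mod_cast hT.card_pos
  have hta : (1 : ℝ) ≤ #A - #T := by
    rw [le_sub_iff_add_le']; exact_mod_cast card_lt_card hTA
  rw [dotP_bundlePrice_of_subset hTA.subset]
  have : R ≤ R * #T * (#A - #T) := by
    rw [mul_assoc]; exact le_mul_of_one_le_right hR (one_le_mul_of_one_le_of_one_le ht hta)
  linarith [neg_abs_le_div_mul (card_le_card hTA.subset) π]

lemma dotP_bundlePrice_self (hπ : A = ∅ → π = 0) : dotP (bundlePrice A π R) (charVec A) = π := by
  rcases A.eq_empty_or_nonempty with rfl | hA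
  · rw [dotP_charVec_empty, hπ rfl]
  · rw [dotP_bundlePrice_of_subset subset_rfl, div_self (by simpa using hA.ne_empty), sub_self]
    ring

lemma dotP_le_dotP_bundlePrice {x : CoordKn n → ℝ} {V : ℝ}
    (hV : ∀ T, dotP x (charVec T) ≤ V) (hA : dotP x (charVec A) ≤ π) (T : Finset (Fin n)) :
    dotP x (charVec T) ≤ dotP (bundlePrice A π (V + |π|)) (charVec T) := by
  have hR : 0 ≤ V + |π| := by
    have := hV ∅; rw [dotP_charVec_empty] at this; positivity
  by_cases hTA : T ⊆ A
  · rcases T.eq_empty_or_nonempty with rfl | hT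
    · simp [dotP_charVec_empty]
    rcases hTA.eq_or_ssubset with rfl | hTA
    · rw [dotP_bundlePrice_self fun h => absurd h hT.ne_empty]; exact hA
    · linarith [hV T, sub_abs_le_dotP_bundlePrice (π := π) hR hTA hT]
  · linarith [hV T, dotP_bundlePrice_inter_add_le (π := π) hR hTA,
      neg_abs_le_dotP_bundlePrice (π := π) hR (inter_subset_right : T ∩ A ⊆ A)]

theorem exists_price_inDemand {ι : Type*} [Finite ι] (w : ι → CoordKn n → ℝ)
    (A : Finset (Fin n)) (b₀ : ι) (hb₀ : ∀ b, dotP (w b) (charVec A) ≤ dotP (w b₀) (charVec A)) :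
    ∃ p, InDemand (w b₀) p A ∧ ∀ b, InDemand (w b) p ∅ := by
  obtain ⟨V, hV⟩ := (Set.finite_range fun bT : ι × Finset (Fin n) =>
    dotP (w bT.1) (charVec bT.2)).bddAbove
  set π := dotP (w b₀) (charVec A)
  have hle b := dotP_le_dotP_bundlePrice (fun T => hV ⟨(b, T), rfl⟩) (hb₀ b)
  refine ⟨bundlePrice A π (V + |π|), inDemand_of_le (hle b₀) ?_,
    fun b => inDemand_of_le (hle b) ?_⟩
  · rw [dotP_bundlePrice_self]
    rintro rfl; exact dotP_charVec_empty _
  · simp [dotP_charVec_empty]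

end CorrelationPricing

open CorrelationPricing in
theorem stmt0_general (n m : ℕ) (hm : 1 ≤ m)
    (w : Fin m → (CoordKn n → ℝ)) (astar : Fin n → ℝ) :
    ∃ (p : CoordKn n → ℝ) (S : Fin m → Finset (Fin n)),
      (∀ b b' : Fin m, b ≠ b' → Disjoint (S b) (S b')) ∧
      (∀ i : Fin n, (∃ b, i ∈ S b) ↔ astar i = 1) ∧
      (∀ b, InDemand (w b) p (S b)) := by
  set A : Finset (Fin n) := {i | astar i = 1}
  obtain ⟨b₀, -, hb₀⟩ :=
    exists_max_image univ (fun b => dotP (w b) (charVec A)) ⟨⟨0, hm⟩, mem_univ _⟩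
  obtain ⟨p, hA, hempty⟩ := exists_price_inDemand w A b₀ fun b => hb₀ b (mem_univ b)
  refine ⟨p, fun b => if b = b₀ then A else ∅, fun b b' hbb' => ?_, fun i => ?_, fun b => ?_⟩
  · dsimp only
    split_ifs <;> simp_all
  · refine ⟨fun ⟨b, hb⟩ => ?_, fun hi => ⟨b₀, by simpa [A] using hi⟩⟩
    dsimp only at hb
    split_ifs at hb <;> simp_all [A]
  · dsimp only
    split_ifs with hb
    · exact hb ▸ hA
    · exact hempty b

/-- **Theorem 1.2 (Main theorem).** For any `n ≥ 1`, `m ≥ 1`, weight vectors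
`w^1, …, w^m ∈ ℝ^d` (graphical valuations on `K_n`) and any bundle
`a* ∈ {0,1}^n`, there exist an anonymous graphical price `p ∈ ℝ^d` and
pairwise disjoint sets `S^1, …, S^m ⊆ [n]` whose union is `{i : a*_i = 1}`,
such that `S^b ∈ D(w^b, p)` for every `b`; i.e. a competitive equilibrium
exists at `a*`. -/
theorem stmt0 (n m : ℕ) (hn : 1 ≤ n) (hm : 1 ≤ m)
    (w : Fin m → (CoordKn n → ℝ)) (astar : Fin n → ℝ)
    (ha : ∀ i, astar i = 0 ∨ astar i = 1) :
    ∃ (p : CoordKn n → ℝ) (S : Fin m → Finset (Fin n)),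
      (∀ b b' : Fin m, b ≠ b' → Disjoint (S b) (S b')) ∧
      (∀ i : Fin n, (∃ b, i ∈ S b) ↔ astar i = 1) ∧
      (∀ b, InDemand (w b) p (S b)) :=
  stmt0_general n m hm w astar
end

section
/- Let n ≥ 1, m ≥ 1, and a* ∈ {0,1,…,m}^n. Then there exists a ∈ ℤ^d ∩ m·P(K_n) with π(a) = a* such that for all weight vectors w^1,…,w^m ∈ ℝ^d there exist a price vector p ∈ ℝ^d and subsets S^1,…,S^m ⊆ [n] with S^b ∈ D(w^b, p) for every b ∈ [m] and ∑_{b=1}^m a_{S^b} = a. That is, when all valuations are graphical with underlying graph K_n, a competitive equilibrium at the bundle a* always exists. -/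
/-!
Take `a = ∑_{k < m} a_{U_k}` with `U_k = {v | k < a*_v}`. These sets form a chain, so once the
vertices are ranked by decreasing `a*`, every `U_k` is a prefix of the ranking. The price vector
has two parts. The penalty `Λ (∑_{v ∈ S} rank v - #edges(S))` vanishes exactly on prefixes and
is at least `Λ` on every other bundle, so for large `Λ` only prefixes are demanded. Among prefixes
the market is an assignment game in which prefix `P_j` is supplied as often as it occurs among the
`U_k`; its Walrasian prices are realised on the prefixes by telescoping vertex prices. The
assignment game has Walrasian prices (Shapley–Shubik): a minimiser of the convex dual potential
`∑_b max_j (G b j - T j) + ∑_j T j` satisfies Hall's condition for the demand sets, and Hall's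
marriage theorem provides the matching.
-/

open Finset Filter Topology

lemma Finset.sup'_sub_ite_le {ι : Type*} [DecidableEq ι] {s : Finset ι} (hs : s.Nonempty)
    (f : ι → ℝ) (N : Finset ι) {ε δ : ℝ} (hδ : δ ≤ ε)
    (hN : ∀ j ∈ s, j ∉ N → f j + δ ≤ s.sup' hs f) :
    s.sup' hs (fun j => f j - if j ∈ N then ε else 0) ≤ s.sup' hs f - δ := by
  refine sup'_le _ _ fun j hj => ?_
  split_ifs with hjN
  · linarith [le_sup' f hj]
  · linarith [hN j hj hjN]

lemma exists_add_mul_le_of_penalty {ι α : Type*} [Finite ι] [Finite α] (V : ι → α → ℝ)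
    {pen : α → ℝ} (hpen : ∀ y, pen y = 0 ∨ pen y ≤ -1) :
    ∃ Λ : ℝ, ∀ i x y, (pen y = 0 → V i y ≤ V i x) → V i y + Λ * pen y ≤ V i x := by
  obtain ⟨M, hM⟩ := Finite.exists_le fun ix : ι × α => |V ix.1 ix.2|
  refine ⟨2 * max M 0, fun i x y hopt => ?_⟩
  rcases hpen y with hy | hy
  · simpa [hy] using hopt hy
  · have hx := abs_le.1 ((hM (i, x)).trans (le_max_left M 0))
    have hy' := abs_le.1 ((hM (i, y)).trans (le_max_left M 0))
    nlinarith [le_max_right M 0]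

lemma exists_equiv_antitone {n : ℕ} (a : Fin n → ℕ) :
    ∃ r : Fin n ≃ Fin n, ∀ u v, r u ≤ r v → a v ≤ a u := by
  refine ⟨(Tuple.sort (OrderDual.toDual ∘ a)).symm, fun u v huv => ?_⟩
  simpa using Tuple.monotone_sort (OrderDual.toDual ∘ a) huv

section AssignmentGame

variable {B : Type*} [Fintype B] (G : B → B → ℝ)

noncomputable def maxSurplus [Nonempty B] (T : B → ℝ) (b : B) : ℝ :=
  univ.sup' univ_nonempty fun b' => G b b' - T b'

noncomputable def assignmentPotential [Nonempty B] (T : B → ℝ) : ℝ :=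
  ∑ b, maxSurplus G T b + ∑ b', T b'

noncomputable def demandSet (T : B → ℝ) (b : B) : Finset B :=
  {b' | ∀ b'', G b b'' - T b'' ≤ G b b' - T b'}

variable [Nonempty B]

lemma le_maxSurplus (T : B → ℝ) (b b' : B) : G b b' - T b' ≤ maxSurplus G T b :=
  le_sup' (fun b' => G b b' - T b') (mem_univ b')

lemma continuous_assignmentPotential : Continuous (assignmentPotential G) := by
  unfold assignmentPotential maxSurplus
  fun_prop

lemma assignmentPotential_add_const (T : B → ℝ) (c : ℝ) :
    assignmentPotential G (fun b => T b + c) = assignmentPotential G T := by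
  have hsup : ∀ b, maxSurplus G (fun b' => T b' + c) b = maxSurplus G T b - c := fun b => by
    rw [maxSurplus, maxSurplus, sub_eq_add_neg _ c, sup'_add]
    congr 1
    ext b'
    ring
  simp only [assignmentPotential, hsup, sum_sub_distrib, sum_add_distrib, sum_const, card_univ]
  ring

lemma exists_sub_le_assignmentPotential :
    ∃ C, ∀ T y z, T y - T z ≤ assignmentPotential G T + C := by
  refine ⟨∑ b, ∑ b', |G b b'|, fun T y z => ?_⟩
  obtain ⟨x, -, hx⟩ := exists_min_image univ T univ_nonempty
  have hG : -∑ b, ∑ b', |G b b'| ≤ ∑ b, G b x := by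
    rw [← sum_neg_distrib]
    exact sum_le_sum fun b _ => (neg_le_neg (single_le_sum (fun b' _ => abs_nonneg (G b b'))
      (mem_univ x))).trans (neg_abs_le _)
  have hsup : ∑ b, (G b x - T x) ≤ ∑ b, maxSurplus G T b :=
    sum_le_sum fun b _ => le_maxSurplus G T b x
  have hT : T y - T x ≤ ∑ b', (T b' - T x) :=
    single_le_sum (f := fun b' => T b' - T x) (fun b' _ => sub_nonneg.2 (hx b' (mem_univ _)))
      (mem_univ y)
  simp only [sum_sub_distrib, sum_const, card_univ] at hsup hT
  unfold assignmentPotential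
  linarith [hx z (mem_univ z)]

theorem exists_forall_assignmentPotential_le :
    ∃ T, ∀ T', assignmentPotential G T ≤ assignmentPotential G T' := by
  obtain ⟨C, hC⟩ := exists_sub_le_assignmentPotential G
  obtain ⟨b₀⟩ := ‹Nonempty B›
  -- the potential is invariant under adding constants, so pin down `T b₀` to make it coercive
  set f := fun T : B → ℝ => assignmentPotential G T + |T b₀|
  have hf : Continuous f := (continuous_assignmentPotential G).add (continuous_apply b₀).abs
  have hcoercive : ∀ T, ‖T‖ - C ≤ f T := fun T => by
    have hbound : ∀ b, |T b| ≤ f T + C := fun b => by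
      have := abs_sub_le_iff.2 ⟨hC T b b₀, hC T b₀ b⟩
      linarith [abs_sub_abs_le_abs_sub (T b) (T b₀)]
    linarith [(pi_norm_le_iff_of_nonneg ((abs_nonneg _).trans (hbound b₀))).2 fun b =>
      (Real.norm_eq_abs (T b)).trans_le (hbound b)]
  obtain ⟨T, hT⟩ := hf.exists_forall_le <| tendsto_atTop_mono hcoercive <|
    tendsto_atTop_add_const_right _ _ tendsto_norm_cocompact_atTop
  refine ⟨T, fun T' => ?_⟩
  calc assignmentPotential G T ≤ f T := le_add_of_nonneg_right (abs_nonneg _)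
    _ ≤ f (fun b => T' b + -T' b₀) := hT _
    _ = assignmentPotential G T' := by simp [f, assignmentPotential_add_const]

lemma exists_pos_forall_notMem_demandSet (T : B → ℝ) :
    ∃ ε > 0, ∀ b b', b' ∉ demandSet G T b → G b b' - T b' + ε ≤ maxSurplus G T b := by
  have : ∀ᶠ ε in 𝓝 (0 : ℝ),
      ∀ b b', b' ∉ demandSet G T b → G b b' - T b' + ε ≤ maxSurplus G T b := by
    refine eventually_all.2 fun b => eventually_all.2 fun b' => ?_
    by_cases hb' : b' ∈ demandSet G T b
    · simp [hb']
    obtain ⟨b'', hb''⟩ : ∃ b'', G b b' - T b' < G b b'' - T b'' := by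
      simpa only [demandSet, mem_filter, mem_univ, true_and, not_forall, not_le] using hb'
    have hlt : G b b' - T b' + 0 < maxSurplus G T b :=
      (add_zero _).trans_lt (hb''.trans_le (le_maxSurplus G T b b''))
    filter_upwards [((continuous_const.add continuous_id).tendsto 0).eventually
      (eventually_lt_nhds hlt)] with ε hε _ using hε.le
  obtain ⟨ε, hε, hpos⟩ := ((this.filter_mono nhdsWithin_le_nhds).and self_mem_nhdsWithin).exists
    (f := 𝓝[>] 0)
  exact ⟨ε, hpos, hε⟩

lemma card_le_card_biUnion_demandSet [DecidableEq B] {T : B → ℝ}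
    (hT : ∀ T', assignmentPotential G T ≤ assignmentPotential G T') (s : Finset B) :
    #s ≤ #(s.biUnion (demandSet G T)) := by
  by_contra! hlt
  set N := s.biUnion (demandSet G T)
  obtain ⟨ε, hε, hgap⟩ := exists_pos_forall_notMem_demandSet G T
  -- raising the prices of everything `s` demands by `ε` lowers the potential by `ε (#s - #N)`
  set T' := fun b' => T b' + if b' ∈ N then ε else 0
  have hsup : ∀ b, maxSurplus G T' b ≤ maxSurplus G T b - if b ∈ s then ε else 0 := fun b => by
    simp_rw [maxSurplus, T', ← sub_sub]
    refine Finset.sup'_sub_ite_le (δ := if b ∈ s then ε else 0) _ _ _ (by split_ifs <;> linarith)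
      fun b' _ hb'N => ?_
    split_ifs with hb
    · exact hgap b b' fun hb' => hb'N (mem_biUnion.2 ⟨b, hb, hb'⟩)
    · exact (add_zero _).trans_le (le_maxSurplus G T b b')
  have : assignmentPotential G T' < assignmentPotential G T := calc
    assignmentPotential G T' ≤ ∑ b, (maxSurplus G T b - if b ∈ s then ε else 0) + ∑ b', T' b' := by
      unfold assignmentPotential
      gcongr with b
      exact hsup b
    _ = assignmentPotential G T - (#s - #N) * ε := by
      simp [assignmentPotential, T', sum_add_distrib, sum_sub_distrib]
      ring
    _ < assignmentPotential G T := by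
      have : (#N : ℝ) < #s := by exact_mod_cast hlt
      nlinarith
  exact (hT T').not_gt this

end AssignmentGame

theorem exists_perm_forall_sub_le {B : Type*} [Fintype B] (G : B → B → ℝ) :
    ∃ (T : B → ℝ) (π : Equiv.Perm B), ∀ b b', G b b' - T b' ≤ G b (π b) - T (π b) := by
  classical
  rcases isEmpty_or_nonempty B with hB | hB
  · exact ⟨0, 1, fun b => isEmptyElim b⟩
  obtain ⟨T, hT⟩ := exists_forall_assignmentPotential_le G
  obtain ⟨f, hf, hfD⟩ := (all_card_le_biUnion_card_iff_exists_injective _).1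
    (card_le_card_biUnion_demandSet G hT)
  exact ⟨T, Equiv.ofBijective f hf.bijective_of_finite, fun b b' => (mem_filter.1 (hfD b)).2 b'⟩

theorem exists_perm_forall_sub_le_comp {B J : Type*} [Fintype B] (G : B → J → ℝ) (ρ : B → J) :
    ∃ (T : J → ℝ) (π : Equiv.Perm B), ∀ b j, G b j - T j ≤ G b (ρ (π b)) - T (ρ (π b)) := by
  rcases isEmpty_or_nonempty B with hB | hB
  · exact ⟨0, 1, fun b => isEmptyElim b⟩
  obtain ⟨T, π, hT⟩ := exists_perm_forall_sub_le fun b b' => G b (ρ b')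
  set u := fun b => G b (ρ (π b)) - T (π b)
  -- price every item at the highest bid net of surplus; on supplied items this is `T` again
  set P : J → ℝ := fun j => univ.sup' univ_nonempty fun b => G b j - u b
  have hP : ∀ b j, G b j - P j ≤ u b := fun b j => by
    linarith [le_sup' (fun b => G b j - u b) (mem_univ b)]
  have hPρ : ∀ b, P (ρ (π b)) = T (π b) := fun b =>
    le_antisymm (sup'_le _ _ fun b' _ => by linarith [hT b' (π b)])
      (by linarith [hP b (ρ (π b))])
  exact ⟨P, π, fun b j => hPρ b ▸ hP b j⟩

section CompleteGraph

variable {n : ℕ}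

@[simp] lemma charVec_inl (S : Finset (Fin n)) (i : Fin n) :
    charVec S (Sum.inl i) = if i ∈ S then 1 else 0 := rfl

@[simp] lemma charVec_inr (S : Finset (Fin n)) (e : EdgeKn n) :
    charVec S (Sum.inr e) = if e.1 ∈ S.sym2 then 1 else 0 := by
  obtain ⟨e, he⟩ := e
  induction e using Sym2.ind with
  | _ i j => simp [charVec]

lemma card_filter_mem_sym2 (S : Finset (Fin n)) :
    #{e : EdgeKn n | e.1 ∈ S.sym2} = (#S).choose 2 := by
  rw [← card_map (Function.Embedding.subtype _)]
  convert Sym2.card_image_offDiag S using 2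
  rw [← Sym2.filter_image_mk_not_isDiag, ← sym2_eq_image]
  ext x
  simp [and_comm]

lemma dotP_sumElim_charVec (f : Fin n → ℝ) (c : ℝ) (S : Finset (Fin n)) :
    dotP (Sum.elim f fun _ => c) (charVec S) = ∑ v ∈ S, f v + c * (#S).choose 2 := by
  simp [dotP, ← card_filter_mem_sym2, sum_ite, mul_comm, -mem_sym2_iff]

lemma dotP_add_left (x y z : CoordKn n → ℝ) : dotP (x + y) z = dotP x z + dotP y z :=
  add_dotProduct x y z

lemma dotP_sub_left (x y z : CoordKn n → ℝ) : dotP (x - y) z = dotP x z - dotP y z :=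
  sub_dotProduct x y z

lemma dotP_smul_left (c : ℝ) (x y : CoordKn n → ℝ) : dotP (c • x) y = c * dotP x y :=
  smul_dotProduct c x y

lemma exists_intCast_eq_charVec (S : Finset (Fin n)) (c : CoordKn n) :
    ∃ z : ℤ, charVec S c = z := by
  rcases c with i | e
  · exact ⟨if i ∈ S then 1 else 0, by simp [apply_ite (Int.cast : ℤ → ℝ)]⟩
  · exact ⟨if e.1 ∈ S.sym2 then 1 else 0, by simp [apply_ite (Int.cast : ℤ → ℝ)]⟩

lemma sum_charVec_mem_dilate {ι : Type*} [Fintype ι] (S : ι → Finset (Fin n)) :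
    ∑ i, charVec (S i) ∈ dilate (Fintype.card ι) (corrPolytope n) := by
  rcases isEmpty_or_nonempty ι with hι | hι
  · exact ⟨charVec ∅, subset_convexHull ℝ _ ⟨∅, rfl⟩, by simp⟩
  refine ⟨univ.centerMass 1 fun i => charVec (S i),
    univ.centerMass_mem_convexHull (fun _ _ => zero_le_one) (by simpa using Fintype.card_pos)
      fun i _ => ⟨S i, rfl⟩, ?_⟩
  simp [centerMass, smul_smul]

end CompleteGraph

section RankPrefix

variable {n : ℕ} (r : Fin n ≃ Fin n)

def rankPrefix (j : ℕ) : Finset (Fin n) := {v | (r v : ℕ) < j}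

def rankPenalty : CoordKn n → ℝ := Sum.elim (fun v => -(r v : ℝ)) fun _ => 1

def prefixPrice (T : ℕ → ℝ) : CoordKn n → ℝ :=
  Sum.elim (fun v => T (r v + 1) - T (r v)) fun _ => 0

lemma sum_rankPrefix {M : Type*} [AddCommMonoid M] (F : ℕ → M) {j : ℕ} (hj : j ≤ n) :
    ∑ v ∈ rankPrefix r j, F (r v) = ∑ k ∈ range j, F k := calc
  _ = ∑ i ∈ univ.filter fun i : Fin n => (i : ℕ) < j, F i :=
    sum_equiv r (by simp [rankPrefix]) (by simp)
  _ = ∑ k ∈ range n with k < j, F k := by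
    rw [sum_filter, sum_filter, Fin.sum_univ_eq_sum_range (fun k => if k < j then F k else 0)]
  _ = ∑ k ∈ range j, F k := by
    congr 1
    ext k
    simp only [mem_filter, mem_range]
    omega

lemma card_rankPrefix {j : ℕ} (hj : j ≤ n) : #(rankPrefix r j) = j := by
  rw [card_eq_sum_ones, sum_rankPrefix r (fun _ => 1) hj, sum_const, card_range, smul_eq_mul,
    mul_one]

lemma sum_rankPrefix_rank {j : ℕ} (hj : j ≤ n) :
    ∑ v ∈ rankPrefix r j, (r v : ℕ) = j.choose 2 := by
  rw [sum_rankPrefix r (fun k => k) hj, sum_range_id, Nat.choose_two_right]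

lemma choose_two_add_card_sdiff_le_sum_rank (S : Finset (Fin n)) :
    (#S).choose 2 + #(S \ rankPrefix r #S) ≤ ∑ v ∈ S, (r v : ℕ) := by
  set R := rankPrefix r #S
  have hS : #S ≤ n := card_finset_fin_le S
  -- every rank in `S \ R` exceeds every rank in `R \ S`, and the two sets are equally large
  have hlow : ∑ v ∈ R \ S, (r v : ℕ) + #(R \ S) ≤ #(R \ S) * #S := by
    simpa [sum_add_distrib] using sum_le_card_nsmul (R \ S) (fun v => (r v : ℕ) + 1) #S
      fun v hv => by simpa [R, rankPrefix] using (mem_sdiff.1 hv).1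
  have hhigh : #(S \ R) * #S ≤ ∑ v ∈ S \ R, (r v : ℕ) := by
    simpa using card_nsmul_le_sum (S \ R) (fun v => (r v : ℕ)) #S
      fun v hv => by simpa [R, rankPrefix] using (mem_sdiff.1 hv).2
  rw [card_sdiff_comm (card_rankPrefix r hS)] at hlow
  rw [← sum_rankPrefix_rank r hS, ← sum_inter_add_sum_sdiff S R, ← sum_inter_add_sum_sdiff R S,
    inter_comm]
  linarith

lemma eq_rankPrefix_card {S : Finset (Fin n)} (hS : ∀ u v, r u ≤ r v → v ∈ S → u ∈ S) :
    S = rankPrefix r #S := by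
  have hcard : #{i | r.symm i ∈ S} = #S := by
    rw [← card_map r.symm.toEmbedding]
    congr 1
    ext v
    simp
  ext v
  have := Fin.lt_card_filter_univ_iff_apply_of_imp (j := r v) (fun i => r.symm i ∈ S)
    fun i j hji hi => by simpa using hS (r.symm j) (r.symm i) (by simpa using hji) hi
  simp only [Equiv.symm_apply_apply, hcard] at this
  simp [rankPrefix, this]

lemma dotP_rankPenalty (S : Finset (Fin n)) :
    dotP (rankPenalty r) (charVec S) = (#S).choose 2 - ∑ v ∈ S, (r v : ℝ) := by
  simp [rankPenalty, dotP_sumElim_charVec]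
  ring

lemma dotP_rankPenalty_rankPrefix {j : ℕ} (hj : j ≤ n) :
    dotP (rankPenalty r) (charVec (rankPrefix r j)) = 0 := by
  rw [dotP_rankPenalty, card_rankPrefix r hj, sub_eq_zero]
  exact_mod_cast (sum_rankPrefix_rank r hj).symm

lemma dotP_rankPenalty_le_neg_one {S : Finset (Fin n)} (hS : S ≠ rankPrefix r #S) :
    dotP (rankPenalty r) (charVec S) ≤ -1 := by
  have hsdiff : 1 ≤ #(S \ rankPrefix r #S) := by
    refine one_le_card.2 (sdiff_nonempty.2 fun hsub => hS (eq_of_subset_of_card_le hsub ?_))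
    rw [card_rankPrefix r (card_finset_fin_le S)]
  have hsum : (#S).choose 2 + 1 ≤ ∑ v ∈ S, (r v : ℕ) := by
    linarith [choose_two_add_card_sdiff_le_sum_rank r S]
  rw [dotP_rankPenalty]
  have : ((#S).choose 2 + 1 : ℝ) ≤ ∑ v ∈ S, (r v : ℝ) := by exact_mod_cast hsum
  linarith

lemma dotP_prefixPrice_rankPrefix (T : ℕ → ℝ) {j : ℕ} (hj : j ≤ n) :
    dotP (prefixPrice r T) (charVec (rankPrefix r j)) = T j - T 0 := by
  rw [prefixPrice, dotP_sumElim_charVec, sum_rankPrefix r (fun k => T (k + 1) - T k) hj,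
    sum_range_sub]
  simp

end RankPrefix

theorem exists_perm_inDemand_rankPrefix {n : ℕ} {B : Type*} [Fintype B] (r : Fin n ≃ Fin n)
    (ρ : B → ℕ) (hρ : ∀ b, ρ b ≤ n) (w : B → CoordKn n → ℝ) :
    ∃ (p : CoordKn n → ℝ) (π : Equiv.Perm B), ∀ b, InDemand (w b) p (rankPrefix r (ρ (π b))) := by
  obtain ⟨T, π, hT⟩ :=
    exists_perm_forall_sub_le_comp (fun b j => dotP (w b) (charVec (rankPrefix r j))) ρ
  set V := fun b (S : Finset (Fin n)) => dotP (w b - prefixPrice r T) (charVec S)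
  set pen := fun S : Finset (Fin n) => dotP (rankPenalty r) (charVec S)
  have hV : ∀ b {j}, j ≤ n →
      V b (rankPrefix r j) = dotP (w b) (charVec (rankPrefix r j)) - T j + T 0 := by
    intro b j hj
    rw [show V b _ = _ from dotP_sub_left .., dotP_prefixPrice_rankPrefix r T hj]
    ring
  have hpen : ∀ S, pen S = 0 ∨ pen S ≤ -1 := fun S => by
    by_cases hS : S = rankPrefix r #S
    · exact Or.inl (hS ▸ dotP_rankPenalty_rankPrefix r (card_finset_fin_le S))
    · exact Or.inr (dotP_rankPenalty_le_neg_one r hS)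
  obtain ⟨Λ, hΛ⟩ := exists_add_mul_le_of_penalty V hpen
  refine ⟨prefixPrice r T - Λ • rankPenalty r, π, fun b S => ?_⟩
  have hutil : ∀ S, dotP (fun c => w b c - (prefixPrice r T - Λ • rankPenalty r) c) (charVec S) =
      V b S + Λ * pen S := fun S => by
    have : (fun c => w b c - (prefixPrice r T - Λ • rankPenalty r) c) =
        w b - prefixPrice r T + Λ • rankPenalty r := by
      ext c
      simp only [Pi.sub_apply, Pi.add_apply, Pi.smul_apply]
      ring
    rw [this, dotP_add_left, dotP_smul_left]
  rw [hutil, hutil, show pen _ = 0 from dotP_rankPenalty_rankPrefix r (hρ _), mul_zero, add_zero]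
  refine hΛ b _ S fun hS => ?_
  have hS' : S = rankPrefix r #S := by
    by_contra h
    linarith [dotP_rankPenalty_le_neg_one r h]
  rw [hS', hV b (card_finset_fin_le _), hV b (hρ _)]
  linarith [hT b #S]

theorem stmt2_general (n m : ℕ)
    (astar : Fin n → ℕ) (ha : ∀ i, astar i ≤ m) :
    ∃ a : CoordKn n → ℝ,
      (∀ c, ∃ z : ℤ, a c = (z : ℝ)) ∧
      a ∈ dilate m (corrPolytope n) ∧
      (∀ i, a (Sum.inl i) = (astar i : ℝ)) ∧
      (∀ w : Fin m → (CoordKn n → ℝ),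
        ∃ (p : CoordKn n → ℝ) (S : Fin m → Finset (Fin n)),
          (∀ b, InDemand (w b) p (S b)) ∧ (∑ b, charVec (S b)) = a) := by
  obtain ⟨r, hr⟩ := exists_equiv_antitone astar
  set U : Fin m → Finset (Fin n) := fun k => {v | (k : ℕ) < astar v}
  have hU : ∀ k, U k = rankPrefix r #(U k) := fun k =>
    eq_rankPrefix_card r fun u v huv hv => by
      simp only [U, mem_filter, mem_univ, true_and] at hv ⊢
      exact hv.trans_le (hr u v huv)
  refine ⟨∑ k, charVec (U k), fun c => ?_, by simpa using sum_charVec_mem_dilate U, fun i => ?_,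
    fun w => ?_⟩
  · choose z hz using fun k => exists_intCast_eq_charVec (U k) c
    exact ⟨∑ k, z k, by simp [Finset.sum_apply, hz]⟩
  · simp [U, Finset.sum_apply, sum_boole, Fin.card_filter_val_lt, ha i]
  · obtain ⟨p, π, hp⟩ := exists_perm_inDemand_rankPrefix r (fun k => #(U k))
      (fun k => card_finset_fin_le _) w
    exact ⟨p, fun b => U (π b), fun b => (congrArg _ (hU (π b))).mpr (hp b),
      Equiv.sum_comp π fun k => charVec (U k)⟩

/-- **Theorem 3.3.** Let `a* ∈ {0,1,…,m}^n`, `n ≥ 1`, `m ≥ 1`. There exists a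
lattice point `a ∈ ℤ^d ∩ m·P(K_n)` with `π(a) = a*` such that for all weight
vectors `w^1, …, w^m ∈ ℝ^d` there exist a price `p ∈ ℝ^d` and sets
`S^1, …, S^m ⊆ [n]` with `S^b ∈ D(w^b, p)` for every `b` and
`∑_b a_{S^b} = a`: a competitive equilibrium at `a*` always exists. -/
theorem stmt2 (n m : ℕ) (hn : 1 ≤ n) (hm : 1 ≤ m)
    (astar : Fin n → ℕ) (ha : ∀ i, astar i ≤ m) :
    ∃ a : CoordKn n → ℝ,
      (∀ c, ∃ z : ℤ, a c = (z : ℝ)) ∧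
      a ∈ dilate m (corrPolytope n) ∧
      (∀ i, a (Sum.inl i) = (astar i : ℝ)) ∧
      (∀ w : Fin m → (CoordKn n → ℝ),
        ∃ (p : CoordKn n → ℝ) (S : Fin m → Finset (Fin n)),
          (∀ b, InDemand (w b) p (S b)) ∧ (∑ b, charVec (S b)) = a) :=
  stmt2_general n m astar ha
end

section
/- Let n ≥ 1, r ≥ 1, and let a ∈ {0,r}^d satisfy: a_i − a_{ij} ≥ 0 for all distinct i, j ∈ [n], and a_i + a_{jk} − a_{ij} − a_{ik} ≥ 0 for all pairwise distinct i, j, k ∈ [n]. Then there exist an integer s with 0 ≤ s ≤ n and pairwise disjoint nonempty subsets S_1,…,S_s ⊆ [n] such that a = r·∑_{t=1}^s a_{S_t}; that is, a is r times the sum of the characteristic vectors of pairwise disjoint complete graphs. -/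
/-!
View `a` as a symmetric function of pairs, with `a_{ii} = a_i`. The relation `i ~ j ↔ a_{ij} ≠ 0`
is then a partial equivalence relation: if `a_{ij} = a_{jk} = r`, inequality (iv) centred at `j`
forces `a_{ik} ≥ r`, and for `i = k` inequality (ii) gives `a_i ≥ a_{ij} = r`. Its classes are the
disjoint cliques: the pair `{i, j}` lies in exactly one class if `i ~ j` and in none otherwise.
-/

open Finset

section PartialEquivalence

variable {α : Type*} [Fintype α] (R : α → α → Prop) [DecidableRel R]

def perClass (i : α) : Finset α := {j | R i j}

variable {R}

@[simp]
lemma mem_perClass {i j : α} : j ∈ perClass R i ↔ R i j := by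
  simp [perClass]

lemma perClass_eq_of_rel [Std.Symm R] [IsTrans α R] {i j : α} (hij : R i j) :
    perClass R i = perClass R j := by
  ext k
  simp only [mem_perClass]
  exact ⟨trans_of R (symm_of R hij), trans_of R hij⟩

variable [DecidableEq α] (R) in
/-- The equivalence classes of a symmetric, transitive relation on its domain `{i | R i i}`. -/
def perClasses : Finset (Finset α) :=
  ({i | R i i} : Finset α).image (perClass R)

variable [DecidableEq α]

lemma mem_perClasses {S : Finset α} : S ∈ perClasses R ↔ ∃ i, R i i ∧ perClass R i = S := by
  simp [perClasses]

lemma card_perClasses_le : #(perClasses R) ≤ Fintype.card α :=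
  card_image_le.trans (card_filter_le _ _)

lemma nonempty_of_mem_perClasses {S : Finset α} (hS : S ∈ perClasses R) : S.Nonempty := by
  obtain ⟨i, hi, rfl⟩ := mem_perClasses.mp hS
  exact ⟨i, mem_perClass.mpr hi⟩

variable [Std.Symm R] [IsTrans α R]

lemma pairwiseDisjoint_perClasses : (perClasses R : Set (Finset α)).PairwiseDisjoint id := by
  intro S hS S' hS' hne
  obtain ⟨i, -, rfl⟩ := mem_perClasses.mp hS
  obtain ⟨j, -, rfl⟩ := mem_perClasses.mp hS'
  refine disjoint_left.mpr fun k hik hjk => hne (perClass_eq_of_rel ?_)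
  exact trans_of R (mem_perClass.mp hik) (symm_of R (mem_perClass.mp hjk))

lemma card_perClasses_containing (i j : α) :
    #{S ∈ perClasses R | i ∈ S ∧ j ∈ S} = if R i j then 1 else 0 := by
  split_ifs with hij
  · have hii : R i i := trans_of R hij (symm_of R hij)
    rw [card_eq_one]
    refine ⟨perClass R i, eq_singleton_iff_unique_mem.mpr ⟨?_, ?_⟩⟩
    · exact mem_filter.mpr ⟨mem_perClasses.mpr ⟨i, hii, rfl⟩, mem_perClass.mpr hii,
        mem_perClass.mpr hij⟩
    · intro S hS
      obtain ⟨hS, hiS, -⟩ := mem_filter.mp hS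
      obtain ⟨k, -, rfl⟩ := mem_perClasses.mp hS
      exact perClass_eq_of_rel (mem_perClass.mp hiS)
  · refine card_eq_zero.mpr (filter_eq_empty_iff.mpr ?_)
    rintro S hS ⟨hiS, hjS⟩
    obtain ⟨k, -, rfl⟩ := mem_perClasses.mp hS
    exact hij (trans_of R (symm_of R (mem_perClass.mp hiS)) (mem_perClass.mp hjS))

end PartialEquivalence

lemma Finset.exists_fin_enum_of_pairwiseDisjoint {β M : Type*} [AddCommMonoid M]
    {T : Finset (Finset β)} (hne : ∀ S ∈ T, S.Nonempty)
    (hdisj : (T : Set (Finset β)).PairwiseDisjoint id) (g : Finset β → M) :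
    ∃ S : Fin #T → Finset β, (∀ t, (S t).Nonempty) ∧
      (∀ t t', t ≠ t' → Disjoint (S t) (S t')) ∧ ∑ t, g (S t) = ∑ x ∈ T, g x := by
  refine ⟨fun t => T.equivFin.symm t, fun t => hne _ (T.equivFin.symm t).2,
    fun t t' hne' => hdisj (T.equivFin.symm t).2 (T.equivFin.symm t').2 ?_, ?_⟩
  · exact fun h => hne' (T.equivFin.symm.injective (Subtype.ext h))
  · rw [← T.sum_coe_sort g]
    exact T.equivFin.symm.sum_comp (fun x : T => g x)

section Coordinates

variable {n : ℕ}

/-- The coordinate indexed by `{i, j}`; for `i = j` this is the vertex coordinate `i`. -/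
def pairCoord (i j : Fin n) : CoordKn n :=
  if h : i = j then Sum.inl i else edgeCoord i j h

lemma pairCoord_self (i : Fin n) : pairCoord i i = Sum.inl i := by
  simp [pairCoord]

lemma pairCoord_of_ne {i j : Fin n} (h : i ≠ j) : pairCoord i j = edgeCoord i j h := by
  simp [pairCoord, h]

lemma pairCoord_comm (i j : Fin n) : pairCoord i j = pairCoord j i := by
  by_cases h : i = j
  · subst h; rfl
  · rw [pairCoord_of_ne h, pairCoord_of_ne (Ne.symm h)]
    exact congrArg Sum.inr (Subtype.ext Sym2.eq_swap)

lemma pairCoord_surjective (c : CoordKn n) : ∃ i j, pairCoord i j = c := by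
  rcases c with i | ⟨e, he⟩
  · exact ⟨i, i, pairCoord_self i⟩
  · induction e using Sym2.ind with
    | _ i j =>
      have hij : i ≠ j := fun h => he (Sym2.mk_isDiag_iff.mpr h)
      exact ⟨i, j, pairCoord_of_ne hij⟩

lemma charVec_pairCoord (S : Finset (Fin n)) (i j : Fin n) :
    charVec S (pairCoord i j) = if i ∈ S ∧ j ∈ S then 1 else 0 := by
  by_cases h : i = j
  · subst h; simp [pairCoord_self, charVec]
  · rw [pairCoord_of_ne h]; rfl

end Coordinates

section Padberg

variable {n : ℕ} {a : CoordKn n → ℝ}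

variable (a) in
def supportRel (i j : Fin n) : Prop := a (pairCoord i j) ≠ 0

instance : Std.Symm (supportRel a) :=
  ⟨fun i j h => by rwa [supportRel, pairCoord_comm]⟩

lemma isTrans_supportRel {r : ℝ} (hr : 0 ≤ r) (haval : ∀ c, a c = 0 ∨ a c = r)
    (h2 : ∀ (i j : Fin n) (h : i ≠ j), 0 ≤ a (Sum.inl i) - a (edgeCoord i j h))
    (h4 : ∀ (i j k : Fin n) (hij : i ≠ j) (hik : i ≠ k) (hjk : j ≠ k),
      0 ≤ a (Sum.inl i) + a (edgeCoord j k hjk) - a (edgeCoord i j hij) - a (edgeCoord i k hik)) :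
    IsTrans (Fin n) (supportRel a) := by
  have hval : ∀ {c}, a c ≠ 0 → a c = r := fun h => (haval _).resolve_left h
  refine ⟨fun i j k (hij : a _ ≠ 0) (hjk : a _ ≠ 0) => ?_⟩
  obtain rfl | hij' := eq_or_ne i j
  · exact hjk
  obtain rfl | hjk' := eq_or_ne j k
  · exact hij
  have hrpos : 0 < r := hr.lt_of_ne (hval hij ▸ hij).symm
  show a (pairCoord i k) ≠ 0
  obtain rfl | hik' := eq_or_ne i k
  · have hvertex := h2 i j hij'
    rw [← pairCoord_of_ne hij', hval hij] at hvertex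
    rw [pairCoord_self]
    linarith
  · have hcentre := h4 j i k hij'.symm hjk' hik'
    rw [← pairCoord_of_ne, ← pairCoord_of_ne, ← pairCoord_of_ne, pairCoord_comm j i,
      hval hij, hval hjk] at hcentre
    rcases haval (Sum.inl j) with hj | hj <;> intro hik <;> linarith

end Padberg

theorem stmt8_general (n r : ℕ)
    (a : CoordKn n → ℝ) (haval : ∀ c, a c = 0 ∨ a c = (r : ℝ))
    (h2 : ∀ (i j : Fin n) (h : i ≠ j),
      0 ≤ a (Sum.inl i) - a (edgeCoord i j h))
    (h4 : ∀ (i j k : Fin n) (hij : i ≠ j) (hik : i ≠ k) (hjk : j ≠ k),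
      0 ≤ a (Sum.inl i) + a (edgeCoord j k hjk)
          - a (edgeCoord i j hij) - a (edgeCoord i k hik)) :
    ∃ (s : ℕ) (_ : s ≤ n) (Ssets : Fin s → Finset (Fin n)),
      (∀ t, (Ssets t).Nonempty) ∧
      (∀ t t' : Fin s, t ≠ t' → Disjoint (Ssets t) (Ssets t')) ∧
      a = (r : ℝ) • ∑ t, charVec (Ssets t) := by
  classical
  have := isTrans_supportRel r.cast_nonneg haval h2 h4
  have ha : a = (r : ℝ) • ∑ S ∈ perClasses (supportRel a), charVec S := by
    funext c
    obtain ⟨i, j, rfl⟩ := pairCoord_surjective c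
    simp only [Pi.smul_apply, Finset.sum_apply, charVec_pairCoord, sum_boole,
      card_perClasses_containing, smul_eq_mul]
    split_ifs with h
    · simpa using (haval _).resolve_left h
    · simpa [supportRel] using h
  obtain ⟨S, hne, hdisj, hsum⟩ := exists_fin_enum_of_pairwiseDisjoint
    (fun _ => nonempty_of_mem_perClasses (R := supportRel a)) pairwiseDisjoint_perClasses charVec
  exact ⟨_, card_perClasses_le.trans (Fintype.card_fin n).le, S, hne, hdisj, hsum ▸ ha⟩

/-- **Lemma 4.1.** Let `a ∈ {0,r}^d` satisfy the Padberg inequalities (ii)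
`a_i - a_{ij} ≥ 0` and (iv) `a_i + a_{jk} - a_{ij} - a_{ik} ≥ 0`. Then `a` is
`r` times the sum of characteristic vectors of at most `n` pairwise disjoint
nonempty complete graphs. -/
theorem stmt8 (n r : ℕ) (hn : 1 ≤ n) (hr : 1 ≤ r)
    (a : CoordKn n → ℝ) (haval : ∀ c, a c = 0 ∨ a c = (r : ℝ))
    (h2 : ∀ (i j : Fin n) (h : i ≠ j),
      0 ≤ a (Sum.inl i) - a (edgeCoord i j h))
    (h4 : ∀ (i j k : Fin n) (hij : i ≠ j) (hik : i ≠ k) (hjk : j ≠ k),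
      0 ≤ a (Sum.inl i) + a (edgeCoord j k hjk)
          - a (edgeCoord i j hij) - a (edgeCoord i k hik)) :
    ∃ (s : ℕ) (_ : s ≤ n) (Ssets : Fin s → Finset (Fin n)),
      (∀ t, (Ssets t).Nonempty) ∧
      (∀ t t' : Fin s, t ≠ t' → Disjoint (Ssets t) (Ssets t')) ∧
      a = (r : ℝ) • ∑ t, charVec (Ssets t) :=
  stmt8_general n r a haval h2 h4
end

section
/- Let n = 4, so d = 10. Let a ∈ ℤ^10 be the point with a_i = 2 for every vertex i ∈ [4] and a_{ij} = 1 for every 2-element subset {i,j} of [4]. Then a ∈ 4·P(K_4) (indeed a is the sum of the midpoints of the four segments [a_∅, a_{{4}}], [a_{{2,3}}, a_{{1,3}}], [a_{{2,3,4}}, a_{{1,3,4}}], [a_{{1,2}}, a_{{1,2,4}}]), but there do not exist subsets S^1, S^2, S^3, S^4 ⊆ [4] with a = ∑_{b=1}^4 a_{S^b}. In particular, the correlation polytope P(K_4) does not have the integer decomposition property. -/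
open Finset
open scoped Pointwise

section DoubleCounting

variable {ι α : Type*} [Fintype ι] [Fintype α] [DecidableEq α] (S : ι → Finset α)

lemma sum_card_eq_sum_card_filter_mem :
    ∑ b, #(S b) = ∑ i, #{b | i ∈ S b} := by
  simp only [card_filter]
  rw [sum_comm]
  simp

lemma sum_card_sq_eq_sum_card_filter_mem :
    ∑ b, #(S b) ^ 2 = ∑ i, ∑ j, #{b | i ∈ S b ∧ j ∈ S b} := by
  have hcard : ∀ b, #(S b) = ∑ i, if i ∈ S b then 1 else 0 := by simp
  simp only [card_filter, hcard, sq, sum_mul_sum, ite_zero_mul_ite_zero, one_mul]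
  rw [sum_comm]
  exact sum_congr rfl fun i _ => sum_comm

omit [Fintype α] in
lemma card_inter_le_one_of_card_filter_mem_le_one
    (hpair : ∀ i j, i ≠ j → #{b | i ∈ S b ∧ j ∈ S b} ≤ 1) {b c : ι} (hbc : b ≠ c) :
    #(S b ∩ S c) ≤ 1 := by
  refine card_le_one.mpr fun i hi j hj => by_contra fun hij => ?_
  rw [mem_inter] at hi hj
  have htwo : 1 < #{b' | i ∈ S b' ∧ j ∈ S b'} :=
    one_lt_card.mpr ⟨b, by simp [hi.1, hj.1], c, by simp [hi.2, hj.2], hbc⟩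
  exact absurd (hpair i j hij) (by omega)

end DoubleCounting

lemma false_of_pairwise_add_le_five (k : Fin 4 → ℕ)
    (hpair : ∀ b c, b ≠ c → k b + k c ≤ 5)
    (hsum : ∑ b, k b = 8) (hsq : ∑ b, k b ^ 2 = 20) : False := by
  simp only [Fin.sum_univ_four] at hsum hsq
  have h01 := hpair 0 1 (by decide); have h02 := hpair 0 2 (by decide)
  have h03 := hpair 0 3 (by decide); have h12 := hpair 1 2 (by decide)
  have h13 := hpair 1 3 (by decide); have h23 := hpair 2 3 (by decide)
  have h0 : k 0 ≤ 5 := by omega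
  have h1 : k 1 ≤ 5 := by omega
  have h2 : k 2 ≤ 5 := by omega
  rw [show k 3 = 8 - k 0 - k 1 - k 2 by omega] at hsq
  interval_cases k 0 <;> interval_cases k 1 <;> interval_cases k 2 <;> omega

lemma not_covers_points_twice_and_pairs_once (S : Fin 4 → Finset (Fin 4))
    (hpoint : ∀ i, #{b | i ∈ S b} = 2)
    (hpair : ∀ i j, i ≠ j → #{b | i ∈ S b ∧ j ∈ S b} = 1) :
    False := by
  have hsum : ∑ b, #(S b) = 8 := by simp [sum_card_eq_sum_card_filter_mem, hpoint]
  have hsq : ∑ b, #(S b) ^ 2 = 20 := by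
    rw [sum_card_sq_eq_sum_card_filter_mem]
    calc ∑ i, ∑ j, #{b | i ∈ S b ∧ j ∈ S b}
      _ = ∑ i : Fin 4, ∑ j : Fin 4, if i = j then 2 else 1 := by
        refine sum_congr rfl fun i _ => sum_congr rfl fun j _ => ?_
        split_ifs with hij
        · simp [hij, hpoint]
        · exact hpair i j hij
      _ = 20 := by decide
  refine false_of_pairwise_add_le_five (fun b => #(S b)) (fun b c hbc => ?_) hsum hsq
  have hinter :=
    card_inter_le_one_of_card_filter_mem_le_one S (fun i j hij => (hpair i j hij).le) hbc
  have hunion : #(S b ∪ S c) ≤ 4 := by simpa using card_le_univ (S b ∪ S c)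
  have := card_union_add_card_inter (S b) (S c)
  omega

section CorrelationPolytope

variable {n : ℕ}

lemma sum_charVec_inl {ι : Type*} [Fintype ι] (S : ι → Finset (Fin n)) (i : Fin n) :
    (∑ b, charVec (S b)) (Sum.inl i) = #{b | i ∈ S b} := by
  simp [Finset.sum_apply, charVec]

lemma sum_charVec_edgeCoord {ι : Type*} [Fintype ι] (S : ι → Finset (Fin n)) {i j : Fin n}
    (hij : i ≠ j) :
    (∑ b, charVec (S b)) (edgeCoord i j hij) = #{b | i ∈ S b ∧ j ∈ S b} := by
  simp [Finset.sum_apply, edgeCoord, charVec]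

lemma midpoint_charVec_mem_corrPolytope (S T : Finset (Fin n)) :
    (1 / 2 : ℝ) • (charVec S + charVec T) ∈ corrPolytope n := by
  rw [smul_add]
  exact convex_convexHull ℝ _ (subset_convexHull ℝ _ (Set.mem_range_self S))
    (subset_convexHull ℝ _ (Set.mem_range_self T)) (by norm_num) (by norm_num) (by norm_num)

lemma dilate_eq_smul {m : ℕ} (A : Set (CoordKn n → ℝ)) : dilate m A = (m : ℝ) • A := by
  ext x
  simp [dilate, Set.mem_smul_set, eq_comm]

lemma add_mem_dilate {m k : ℕ} {A : Set (CoordKn n → ℝ)} (hA : Convex ℝ A)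
    {x y : CoordKn n → ℝ} (hx : x ∈ dilate m A) (hy : y ∈ dilate k A) :
    x + y ∈ dilate (m + k) A := by
  rw [dilate_eq_smul] at hx hy ⊢
  rw [Nat.cast_add, hA.add_smul m.cast_nonneg k.cast_nonneg]
  exact Set.add_mem_add hx hy

lemma mem_dilate_one {A : Set (CoordKn n → ℝ)} {x : CoordKn n → ℝ} (hx : x ∈ A) :
    x ∈ dilate 1 A :=
  ⟨x, hx, by simp⟩

end CorrelationPolytope

lemma sum_four_midpoints_eq :
    (1 / 2 : ℝ) • (charVec (∅ : Finset (Fin 4)) + charVec {3})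
      + (1 / 2 : ℝ) • (charVec ({1, 2} : Finset (Fin 4)) + charVec {0, 2})
      + (1 / 2 : ℝ) • (charVec ({1, 2, 3} : Finset (Fin 4)) + charVec {0, 2, 3})
      + (1 / 2 : ℝ) • (charVec ({0, 1} : Finset (Fin 4)) + charVec {0, 1, 3})
      = Sum.elim (fun _ => 2) (fun _ => 1) := by
  funext c
  rcases c with i | ⟨e, he⟩
  · fin_cases i <;> simp [charVec] <;> norm_num
  · induction e using Sym2.ind with
    | _ i j =>
      rw [Sym2.mk_isDiag_iff] at he
      fin_cases i <;> fin_cases j <;> simp_all [charVec] <;> norm_num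

/- `[4]` is encoded as `Fin 4 = {0,1,2,3}`: the paper's vertex `4` is `3`. -/
/-- **Failure of IDP for `P(K_4)`** (here `[4]` is encoded as `Fin 4 = {0,1,2,3}`).
The point `a` with `a_i = 2` and `a_{ij} = 1` is the sum of the midpoints of
the four edges `[a_∅, a_{{3}}]`, `[a_{{1,2}}, a_{{0,2}}]`,
`[a_{{1,2,3}}, a_{{0,2,3}}]`, `[a_{{0,1}}, a_{{0,1,3}}]` of `P(K_4)`, hence
lies in `4·P(K_4)`, but it is not a sum of four lattice points `a_{S^b}` of
`P(K_4)`. -/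
theorem stmt16 (a : CoordKn 4 → ℝ)
    (hav : ∀ i : Fin 4, a (Sum.inl i) = 2)
    (hae : ∀ e : EdgeKn 4, a (Sum.inr e) = 1) :
    a = (1 / 2 : ℝ) • (charVec (∅ : Finset (Fin 4)) + charVec {3})
      + (1 / 2 : ℝ) • (charVec ({1, 2} : Finset (Fin 4)) + charVec {0, 2})
      + (1 / 2 : ℝ) • (charVec ({1, 2, 3} : Finset (Fin 4)) + charVec {0, 2, 3})
      + (1 / 2 : ℝ) • (charVec ({0, 1} : Finset (Fin 4)) + charVec {0, 1, 3}) ∧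
    a ∈ dilate 4 (corrPolytope 4) ∧
    ¬ ∃ S : Fin 4 → Finset (Fin 4), (∑ b, charVec (S b)) = a := by
  have hmid := (funext (Sum.rec hav hae) : a = Sum.elim _ _).trans sum_four_midpoints_eq.symm
  refine ⟨hmid, ?_, ?_⟩
  · have hP : Convex ℝ (corrPolytope 4) := convex_convexHull ℝ _
    rw [hmid]
    exact add_mem_dilate hP (add_mem_dilate hP (add_mem_dilate hP
      (mem_dilate_one (midpoint_charVec_mem_corrPolytope _ _))
      (mem_dilate_one (midpoint_charVec_mem_corrPolytope _ _)))
      (mem_dilate_one (midpoint_charVec_mem_corrPolytope _ _)))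
      (mem_dilate_one (midpoint_charVec_mem_corrPolytope _ _))
  · rintro ⟨S, hS⟩
    refine not_covers_points_twice_and_pairs_once S (fun i => ?_) (fun i j hij => ?_)
    · exact_mod_cast (sum_charVec_inl S i).symm.trans (hS ▸ hav i)
    · exact_mod_cast (sum_charVec_edgeCoord S hij).symm.trans (hS ▸ hae _)
end

section
/- Let G be the graph on vertex set [5] with edge set E(G) = {{1,2},{2,3},{3,4},{1,4},{1,5},{4,5}}, so d = 11. Define the segments F^1 = conv{a_{{2}}, a_{{1,3}}}, F^2 = conv{a_{{3}}, a_{{2,4}}}, F^3 = conv{a_{{5}}, a_{{1}}}, F^4 = conv{a_{{5}}, a_{{4}}} in ℝ^11. Then: (a) each F^b is a face of P(G); (b) the point a ∈ ℝ^11 with a_i = 1 for all i ∈ [5] and a_e = 0 for all e ∈ E(G) lies in the Minkowski sum F^1 + F^2 + F^3 + F^4, and it is the unique point x of F^1 + F^2 + F^3 + F^4 with π(x) = (1,1,1,1,1); (c) there is no choice of endpoints q^b of the segments F^b (b = 1,…,4) with π(q^1 + q^2 + q^3 + q^4) = (1,1,1,1,1). Hence for non-complete value graphs, a competitive equilibrium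 at the bundle (1,1,1,1,1) may fail to exist. -/
/-- Coordinates of `ℝ^11` for the graph `G` on vertex set `[5]` (encoded as
`Fin 5 = {0,…,4}`) with the six edges
`{1,2},{2,3},{3,4},{1,4},{1,5},{4,5}` (1-indexed), i.e.
`{0,1},{1,2},{2,3},{0,3},{0,4},{3,4}` (0-indexed). -/
abbrev Coord17 : Type := Fin 5 ⊕ Fin 6

/-- The endpoints of the six edges of `G` (0-indexed). -/
def edge17 : Fin 6 → Fin 5 × Fin 5 :=
  ![(0, 1), (1, 2), (2, 3), (0, 3), (0, 4), (3, 4)]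

/-- The characteristic vector `a_S` of `S ⊆ [5]` for the graph `G`. -/
def cv17 (S : Finset (Fin 5)) : Coord17 → ℝ
  | Sum.inl i => if i ∈ S then 1 else 0
  | Sum.inr t => if (edge17 t).1 ∈ S ∧ (edge17 t).2 ∈ S then 1 else 0

/-- The polytope `P(G)`. -/
def poly17 : Set (Coord17 → ℝ) := convexHull ℝ (Set.range cv17)

/-- The standard inner product on `ℝ^11`. -/
def dot17 (x y : Coord17 → ℝ) : ℝ := ∑ c, x c * y c

/-- `F` is a face of `P(G)`. -/
def IsFace17 (F : Set (Coord17 → ℝ)) : Prop :=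
  ∃ c : Coord17 → ℝ,
    F = {x | x ∈ poly17 ∧ ∀ y ∈ poly17, dot17 c y ≤ dot17 c x}

/-- First endpoints of the four segments: `a_{{2}}, a_{{3}}, a_{{5}}, a_{{5}}`
(1-indexed). -/
def u17 : Fin 4 → (Coord17 → ℝ) := ![cv17 {1}, cv17 {2}, cv17 {4}, cv17 {4}]

/-- Second endpoints of the four segments:
`a_{{1,3}}, a_{{2,4}}, a_{{1}}, a_{{4}}` (1-indexed). -/
def v17 : Fin 4 → (Coord17 → ℝ) :=
  ![cv17 {0, 2}, cv17 {1, 3}, cv17 {0}, cv17 {3}]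

/-- The four segments `F^1, …, F^4`. -/
def F17 (b : Fin 4) : Set (Coord17 → ℝ) := segment ℝ (u17 b) (v17 b)

/-- The point `a` with `a_i = 1` for all vertices and `a_e = 0` for all edges. -/
def a17 : Coord17 → ℝ
  | Sum.inl _ => 1
  | Sum.inr _ => 0

/-!
A linear functional exposes, on the convex hull of a set, the convex hull of the points of the set
where it is maximal. Weighting the vertices suitably and penalizing every edge heavily, each `F^b`
is exposed in this way; that the two endpoints are the only maximizers among the 32 vertices of
`P(G)` is a finite check. All endpoints are characteristic vectors of independent sets, so every
point of `F^1 + ⋯ + F^4` vanishes on the edge coordinates: this gives uniqueness, and the sum of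
the midpoints realizes `a`. Finally, covering vertex 2 exactly once forces the endpoint choices on
`F^1` and `F^2` to agree, while covering vertices 1, 4 and 5 exactly once forces them to differ.
-/

section MaximizersConvexHull

variable {𝕜 E : Type*} [Field 𝕜] [LinearOrder 𝕜] [IsStrictOrderedRing 𝕜]
  [AddCommGroup E] [Module 𝕜 E]

theorem LinearMap.maximizers_convexHull (f : E →ₗ[𝕜] 𝕜) (s : Set E) :
    {x | x ∈ convexHull 𝕜 s ∧ ∀ y ∈ convexHull 𝕜 s, f y ≤ f x} =
      convexHull 𝕜 {x | x ∈ s ∧ ∀ y ∈ s, f y ≤ f x} := by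
  ext x
  constructor
  · rintro ⟨hx, hmax⟩
    obtain ⟨ι, _, w, z, hw₀, hw₁, hz, rfl⟩ := mem_convexHull_iff_exists_fintype.1 hx
    have hgap : ∑ i, w i * (f (∑ j, w j • z j) - f (z i)) = 0 := by
      simp only [mul_sub, Finset.sum_sub_distrib, ← Finset.sum_mul, hw₁, one_mul, map_sum,
        map_smul, smul_eq_mul, sub_self]
    have hattain : ∀ i, w i ≠ 0 → f (z i) = f (∑ j, w j • z j) := fun i hi => by
      have := (Finset.sum_eq_zero_iff_of_nonneg fun j _ =>
        mul_nonneg (hw₀ j) (sub_nonneg.2 (hmax _ (subset_convexHull 𝕜 s (hz j))))).1 hgap i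
        (Finset.mem_univ i)
      linarith [(mul_eq_zero.1 this).resolve_left hi]
    obtain ⟨i₀, hi₀⟩ : ∃ i, w i ≠ 0 := by
      by_contra! h
      simp [h] at hw₁
    refine mem_convexHull_of_exists_fintype w (fun i => if w i = 0 then z i₀ else z i) hw₀ hw₁
      (fun i => ?_) (Finset.sum_congr rfl fun i _ => by split_ifs with h <;> simp [h])
    have hmaxs : ∀ j, w j ≠ 0 → ∀ y ∈ s, f y ≤ f (z j) := fun j hj y hy =>
      (hattain j hj).symm ▸ hmax y (subset_convexHull 𝕜 s hy)
    split_ifs with h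
    · exact ⟨hz i₀, hmaxs i₀ hi₀⟩
    · exact ⟨hz i, hmaxs i h⟩
  · intro hx
    obtain ⟨t, ht, htmax⟩ := convexHull_nonempty_iff.1 ⟨x, hx⟩
    have hlevel : convexHull 𝕜 {x | x ∈ s ∧ ∀ y ∈ s, f y ≤ f x} ⊆ {y | f y = f t} :=
      convexHull_min (fun y hy => le_antisymm (htmax y hy.1) (hy.2 t ht))
        (convex_hyperplane f.isLinear _)
    have hbelow : convexHull 𝕜 s ⊆ {y | f y ≤ f t} :=
      convexHull_min htmax (convex_halfSpace_le f.isLinear _)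
    refine ⟨convexHull_mono (fun y hy => hy.1) hx, fun y hy => ?_⟩
    rw [hlevel hx]
    exact hbelow hy

end MaximizersConvexHull

open Finset

def uSet17 : Fin 4 → Finset (Fin 5) := ![{1}, {2}, {4}, {4}]

def vSet17 : Fin 4 → Finset (Fin 5) := ![{0, 2}, {1, 3}, {0}, {3}]

lemma u17_eq (b : Fin 4) : u17 b = cv17 (uSet17 b) := by
  fin_cases b <;> rfl

lemma v17_eq (b : Fin 4) : v17 b = cv17 (vSet17 b) := by
  fin_cases b <;> rfl

def support17 (S : Finset (Fin 5)) : Finset Coord17 :=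
  S.disjSum {t | (edge17 t).1 ∈ S ∧ (edge17 t).2 ∈ S}

lemma dot17_cv17 (c : Coord17 → ℝ) (S : Finset (Fin 5)) :
    dot17 c (cv17 S) = ∑ k ∈ support17 S, c k := by
  simp [dot17, cv17, support17, Fintype.sum_sum_type, sum_disjSum, sum_filter, mul_ite]

lemma isFace17_segment (c : Coord17 → ℤ) (S₁ S₂ : Finset (Fin 5))
    (hc : ∀ S, (∀ T, ∑ k ∈ support17 T, c k ≤ ∑ k ∈ support17 S, c k) ↔ S = S₁ ∨ S = S₂) :
    IsFace17 (segment ℝ (cv17 S₁) (cv17 S₂)) := by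
  have hdot : ∀ S, (∀ y ∈ Set.range cv17, dot17 (fun k => c k) y ≤
      dot17 (fun k => c k) (cv17 S)) ↔ S = S₁ ∨ S = S₂ := fun S => by
    rw [Set.forall_mem_range, ← hc]
    simp only [dot17_cv17]
    exact_mod_cast Iff.rfl
  have hmax : {x | x ∈ Set.range cv17 ∧ ∀ y ∈ Set.range cv17,
      dot17 (fun k => c k) y ≤ dot17 (fun k => c k) x} = {cv17 S₁, cv17 S₂} := by
    ext x
    constructor
    · rintro ⟨⟨S, rfl⟩, hS⟩
      rcases (hdot S).1 hS with rfl | rfl <;> simp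
    · rintro (rfl | rfl)
      exacts [⟨⟨S₁, rfl⟩, (hdot S₁).2 (Or.inl rfl)⟩, ⟨⟨S₂, rfl⟩, (hdot S₂).2 (Or.inr rfl)⟩]
  refine ⟨fun k => c k, ?_⟩
  have hlin : dot17 (fun k => c k) = dotProductBilin ℝ ℝ (fun k => (c k : ℝ)) := rfl
  rw [poly17, hlin, LinearMap.maximizers_convexHull, ← hlin, hmax, convexHull_pair]

-- The edge penalty confines the maximizers to independent sets, among which the vertex weights
-- single out the two endpoints of `F17 b`.
def faceWeight17 : Fin 4 → Coord17 → ℤ :=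
  ![Sum.elim ![1, 2, 1, -10, -10] (fun _ => -10),
    Sum.elim ![-10, 1, 2, 1, -10] (fun _ => -10),
    Sum.elim ![1, -10, -10, -10, 1] (fun _ => -10),
    Sum.elim ![-10, -10, -10, 1, 1] (fun _ => -10)]

lemma faceWeight17_maximizers : ∀ b S,
    (∀ T, ∑ k ∈ support17 T, faceWeight17 b k ≤ ∑ k ∈ support17 S, faceWeight17 b k) ↔
      S = uSet17 b ∨ S = vSet17 b := by
  decide +kernel

lemma isFace17_F17 (b : Fin 4) : IsFace17 (F17 b) := by
  rw [F17, u17_eq, v17_eq]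
  exact isFace17_segment _ _ _ (faceWeight17_maximizers b)

lemma uSet17_vSet17_edgeFree (b : Fin 4) (t : Fin 6) :
    ¬((edge17 t).1 ∈ uSet17 b ∧ (edge17 t).2 ∈ uSet17 b) ∧
      ¬((edge17 t).1 ∈ vSet17 b ∧ (edge17 t).2 ∈ vSet17 b) := by
  revert b t
  decide

lemma apply_inr_eq_zero_of_mem_F17 {b : Fin 4} {x : Coord17 → ℝ} (hx : x ∈ F17 b) (t : Fin 6) :
    x (Sum.inr t) = 0 := by
  obtain ⟨α, β, -, -, -, rfl⟩ := hx
  simp [u17_eq, v17_eq, cv17, uSet17_vSet17_edgeFree b t]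

lemma sum_eq_a17_of_mem_F17 (x : Fin 4 → Coord17 → ℝ) (hx : ∀ b, x b ∈ F17 b)
    (hvert : ∀ i : Fin 5, (∑ b, x b) (Sum.inl i) = 1) : ∑ b, x b = a17 := by
  funext k
  cases k with
  | inl i => exact hvert i
  | inr t => simp [Finset.sum_apply, apply_inr_eq_zero_of_mem_F17 (hx _), a17]

lemma sum_cv17_apply_inl {ι : Type*} (s : Finset ι) (X : ι → Finset (Fin 5)) (i : Fin 5) :
    (∑ b ∈ s, cv17 (X b)) (Sum.inl i) = #{b ∈ s | i ∈ X b} := by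
  simp [Finset.sum_apply, cv17]

lemma card_uSet17_add_card_vSet17 : ∀ i, #{b | i ∈ uSet17 b} + #{b | i ∈ vSet17 b} = 2 := by
  decide

lemma sum_midpoint_apply_inl (i : Fin 5) :
    (∑ b, midpoint ℝ (u17 b) (v17 b)) (Sum.inl i) = 1 := by
  have h : (#{b | i ∈ uSet17 b} + #{b | i ∈ vSet17 b} : ℝ) = 2 := by
    exact_mod_cast card_uSet17_add_card_vSet17 i
  simp only [midpoint_eq_smul_add, ← smul_sum, sum_add_distrib, u17_eq, v17_eq, Pi.smul_apply,
    Pi.add_apply, sum_cv17_apply_inl, h]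
  norm_num

-- `p b = true` selects the endpoint `v17 b`.
lemma exists_card_ne_one_of_endpoint_choice :
    ∀ p : Fin 4 → Bool, ∃ i, #{b | i ∈ cond (p b) (vSet17 b) (uSet17 b)} ≠ 1 := by
  decide

lemma not_exists_endpoints_sum_apply_inl_eq_one :
    ¬ ∃ q : Fin 4 → (Coord17 → ℝ), (∀ b, q b = u17 b ∨ q b = v17 b) ∧
      (∀ i : Fin 5, (∑ b, q b) (Sum.inl i) = 1) := by
  rintro ⟨q, hq, hvert⟩
  choose p hp using fun b => show ∃ p : Bool, q b = cv17 (cond p (vSet17 b) (uSet17 b)) from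
    (hq b).elim (fun h => ⟨false, h.trans (u17_eq b)⟩) (fun h => ⟨true, h.trans (v17_eq b)⟩)
  obtain ⟨i, hi⟩ := exists_card_ne_one_of_endpoint_choice p
  have h := hvert i
  simp only [hp, sum_cv17_apply_inl] at h
  exact hi (by exact_mod_cast h)

/-- **Example 3.2.** (a) Each `F^b` is a face of `P(G)`; (b) the point `a`
lies in the Minkowski sum `F^1 + F^2 + F^3 + F^4` and is the unique point of
that sum projecting to `(1,1,1,1,1)`; (c) no choice of endpoints of the
segments sums to a point projecting to `(1,1,1,1,1)`. Hence a competitive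
equilibrium at the bundle `(1,1,1,1,1)` may fail for non-complete value
graphs. -/
theorem stmt17 :
    (∀ b, IsFace17 (F17 b)) ∧
    (∃ x : Fin 4 → (Coord17 → ℝ), (∀ b, x b ∈ F17 b) ∧ (∑ b, x b) = a17) ∧
    (∀ x : Fin 4 → (Coord17 → ℝ), (∀ b, x b ∈ F17 b) →
      (∀ i : Fin 5, (∑ b, x b) (Sum.inl i) = 1) → (∑ b, x b) = a17) ∧
    ¬ ∃ q : Fin 4 → (Coord17 → ℝ),
        (∀ b, q b = u17 b ∨ q b = v17 b) ∧
        (∀ i : Fin 5, (∑ b, q b) (Sum.inl i) = 1) := by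
  have hmid : ∀ b, midpoint ℝ (u17 b) (v17 b) ∈ F17 b := fun b => midpoint_mem_segment _ _
  exact ⟨isFace17_F17, ⟨_, hmid, sum_eq_a17_of_mem_F17 _ hmid sum_midpoint_apply_inl⟩,
    sum_eq_a17_of_mem_F17, not_exists_endpoints_sum_apply_inl_eq_one⟩
end
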